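/- arXiv:0801.1066 — 2 statements merged into one kernel-verified Lean document; each statement's English description precedes it below -/
import Mathlib

section
/- If for some N and K the Gilbreath differences satisfy d₁(1) = ⋯ = d_K(1) = 1 and d_K(n) ∈ {0, 2} for all 2 ≤ n ≤ N, then d_k(1) = 1 for all K ≤ k ≤ N + K − 1. -/
/-!
The pattern "first entry 1, then only 0s and 2s" reproduces itself one row down, losing one
entry at the right end, since `|1 - e| = 1` and `|e - e'| ∈ {0, 2}` for `e, e' ∈ {0, 2}`.
Starting from row `K`, where the pattern holds up to position `N`, it therefore survives for
`N - 1` further rows.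
-/

lemma Nat.dist_one_of_eq_zero_or_eq_two {b : ℕ} (hb : b = 0 ∨ b = 2) : Nat.dist 1 b = 1 := by
  rcases hb with rfl | rfl <;> rfl

lemma Nat.dist_eq_zero_or_eq_two {a b : ℕ} (ha : a = 0 ∨ a = 2) (hb : b = 0 ∨ b = 2) :
    Nat.dist a b = 0 ∨ Nat.dist a b = 2 := by
  rcases ha with rfl | rfl <;> rcases hb with rfl | rfl <;> decide

def IsGilbreathRow (d : ℕ → ℕ → ℕ) (k M : ℕ) : Prop :=
  d k 1 = 1 ∧ ∀ n, 2 ≤ n → n ≤ M → d k n = 0 ∨ d k n = 2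

namespace IsGilbreathRow

variable {d : ℕ → ℕ → ℕ}

lemma mono {k M M' : ℕ} (h : IsGilbreathRow d k M) (hM : M' ≤ M) : IsGilbreathRow d k M' :=
  ⟨h.1, fun n hn hnM => h.2 n hn (hnM.trans hM)⟩

lemma succ (hrec : ∀ k n, d (k + 1) n = Nat.dist (d k n) (d k (n + 1))) {k M : ℕ}
    (h : IsGilbreathRow d k (M + 2)) : IsGilbreathRow d (k + 1) (M + 1) := by
  obtain ⟨hfirst, hrest⟩ := h
  refine ⟨?_, fun n hn hnM => ?_⟩
  · rw [hrec, hfirst]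
    exact Nat.dist_one_of_eq_zero_or_eq_two (hrest 2 le_rfl (by omega))
  · rw [hrec]
    exact Nat.dist_eq_zero_or_eq_two (hrest n hn (by omega)) (hrest (n + 1) (by omega) (by omega))

lemma iterate (hrec : ∀ k n, d (k + 1) n = Nat.dist (d k n) (d k (n + 1))) {k : ℕ} (j : ℕ) :
    ∀ {M : ℕ}, IsGilbreathRow d k (M + j + 1) → IsGilbreathRow d (k + j) (M + 1) := by
  induction j with
  | zero => exact id
  | succ j ih =>
    intro M h
    exact succ hrec (ih (M := M + 1) (by rwa [show M + 1 + j + 1 = M + (j + 1) + 1 by omega]))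

end IsGilbreathRow

theorem gilbreath_propagation (d : ℕ → ℕ → ℕ)
    (hrec : ∀ k n, d (k + 1) n = Nat.dist (d k n) (d k (n + 1)))
    (N K : ℕ) (hK : 1 ≤ K)
    (h1 : ∀ k, 1 ≤ k → k ≤ K → d k 1 = 1)
    (h02 : ∀ n, 2 ≤ n → n ≤ N → d K n = 0 ∨ d K n = 2) :
    ∀ k, K ≤ k → k ≤ N + K - 1 → d k 1 = 1 := by
  intro k hKk hkN
  have hrowK : IsGilbreathRow d K N := ⟨h1 K hK le_rfl, h02⟩
  have hk : IsGilbreathRow d (K + (k - K)) 1 :=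
    IsGilbreathRow.iterate hrec (k - K) (M := 0) (hrowK.mono (by omega))
  rw [Nat.add_sub_cancel' hKk] at hk
  exact hk.1
end

section
/- Chebyshev's bound: ϑ(x) = O(x), i.e. there is a constant C such that ∑_{p ≤ x, p prime} log p ≤ C·x for all x ≥ 1. -/
open Chebyshev

theorem sum_log_primes_Iic_floor_eq_theta (x : ℝ) :
    ∑ p ∈ (Finset.Iic ⌊x⌋₊).filter Nat.Prime, Real.log p = θ x := by
  rw [theta_eq_sum_Icc, Finset.Iic_eq_Icc, Nat.bot_eq_zero]

theorem chebyshev_theta_bigO :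
    ∃ C : ℝ, ∀ x : ℝ, 1 ≤ x →
      ∑ p ∈ (Finset.Iic ⌊x⌋₊).filter Nat.Prime, Real.log p ≤ C * x := by
  refine ⟨Real.log 4, fun x hx => ?_⟩
  rw [sum_log_primes_Iic_floor_eq_theta]
  exact theta_le_log4_mul_x (zero_le_one.trans hx)
end
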